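/- Let n ≥ 1 and 1 < q < 2, and let R > 0. Then there exists δ > 0, depending only on q and R, such that for all p₁, p₂ ∈ ℝⁿ with |p₁| ≤ R and |p₂| ≤ R, |p₁|^q/q − |p₂|^q/q ≥ |p₂|^{q−2} p₂ · (p₁ − p₂) + δ|p₁ − p₂|², where |p₂|^{q−2}p₂ is interpreted as 0 when p₂ = 0. That is, p ↦ |p|^q/q is (2,δ)-strongly convex on every bounded convex subset of ℝⁿ when 1 < q < 2. -/

import Mathlib

open RealInnerProductSpace Set

/-!
With `K = (q - 1) R^(q-2)`, the derivative `t^(q-1) - K t` of `t^q/q - K t²/2` is nondecreasing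
on `[0, R]` because `(q - 1) t^(q-2) ≥ K` there; so this function is convex on `[0, R]`, and its
tangent-line inequality is the one-dimensional estimate with `δ = K/2`. For vectors, put
`x = |p₁|`, `y = |p₂|`, `s = p₂ · p₁`: for fixed `x, y` the right-hand side is affine in `s` with
slope `y^(q-2) - 2δ ≥ 0`, so the worst case is `s = xy`, where the two estimates coincide.
-/

theorem ConvexOn.add_mul_sub_le_of_hasDerivAt {S : Set ℝ} {f : ℝ → ℝ} {f' x y : ℝ}
    (hfc : ConvexOn ℝ S f) (hx : x ∈ S) (hy : y ∈ S) (hf : HasDerivAt f f' x) :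
    f x + f' * (y - x) ≤ f y := by
  rcases lt_trichotomy x y with hxy | rfl | hyx
  · have := hfc.le_slope_of_hasDerivAt hx hy hxy hf
    rw [slope_def_field, le_div_iff₀ (sub_pos.2 hxy)] at this
    linarith
  · simp
  · have := hfc.slope_le_of_hasDerivAt hy hx hyx hf
    rw [slope_def_field, div_le_iff₀ (sub_pos.2 hyx)] at this
    linarith

section RpowOnInterval

variable {q R : ℝ}

theorem monotoneOn_rpow_sub_mul (hq1 : 1 ≤ q) (hq2 : q ≤ 2) :
    MonotoneOn (fun t : ℝ ↦ t ^ (q - 1) - (q - 1) * R ^ (q - 2) * t) (Icc 0 R) := by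
  refine monotoneOn_of_hasDerivWithinAt_nonneg (convex_Icc 0 R)
    (f' := fun t ↦ (q - 1) * t ^ (q - 2) - (q - 1) * R ^ (q - 2)) ?_ ?_ ?_
  · exact ((continuous_id.rpow_const fun _ ↦ Or.inr (by linarith)).sub
      (continuous_const.mul continuous_id)).continuousOn
  · intro t ht
    rw [interior_Icc] at ht
    have := (Real.hasDerivAt_rpow_const (p := q - 1) (Or.inl ht.1.ne')).sub
      ((hasDerivAt_id t).const_mul ((q - 1) * R ^ (q - 2)))
    refine this.hasDerivWithinAt.congr_deriv ?_
    ring_nf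
  · intro t ht
    rw [interior_Icc] at ht
    have : R ^ (q - 2) ≤ t ^ (q - 2) := Real.rpow_le_rpow_of_nonpos ht.1 ht.2.le (by linarith)
    nlinarith

theorem hasDerivAt_rpow_div_sub_mul_sq (hq1 : 1 ≤ q) (t : ℝ) :
    HasDerivAt (fun t : ℝ ↦ t ^ q / q - (q - 1) * R ^ (q - 2) / 2 * t ^ 2)
      (t ^ (q - 1) - (q - 1) * R ^ (q - 2) * t) t := by
  have := ((Real.hasDerivAt_rpow_const (x := t) (Or.inr hq1)).div_const q).sub
    ((hasDerivAt_pow 2 t).const_mul ((q - 1) * R ^ (q - 2) / 2))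
  refine this.congr_deriv ?_
  field_simp
  ring

theorem convexOn_rpow_div_sub_mul_sq (hq1 : 1 ≤ q) (hq2 : q ≤ 2) :
    ConvexOn ℝ (Icc 0 R) (fun t : ℝ ↦ t ^ q / q - (q - 1) * R ^ (q - 2) / 2 * t ^ 2) := by
  have hderiv := hasDerivAt_rpow_div_sub_mul_sq (R := R) hq1
  refine MonotoneOn.convexOn_of_deriv (convex_Icc 0 R)
    (fun t _ ↦ (hderiv t).continuousAt.continuousWithinAt)
    (fun t _ ↦ (hderiv t).differentiableAt.differentiableWithinAt) ?_
  rw [interior_Icc]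
  refine ((monotoneOn_rpow_sub_mul hq1 hq2).mono Ioo_subset_Icc_self).congr ?_
  exact fun t _ ↦ ((hderiv t).deriv).symm

theorem rpow_div_sub_rpow_div_ge (hq1 : 1 ≤ q) (hq2 : q ≤ 2) {x y : ℝ}
    (hx : x ∈ Icc 0 R) (hy : y ∈ Icc 0 R) :
    x ^ q / q - y ^ q / q ≥ y ^ (q - 1) * (x - y) + (q - 1) * R ^ (q - 2) / 2 * (x - y) ^ 2 := by
  have := (convexOn_rpow_div_sub_mul_sq hq1 hq2).add_mul_sub_le_of_hasDerivAt hy hx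
    (hasDerivAt_rpow_div_sub_mul_sq hq1 y)
  linear_combination this

theorem norm_rpow_div_sub_norm_rpow_div_ge {E : Type*} [NormedAddCommGroup E]
    [InnerProductSpace ℝ E] (hq1 : 1 < q) (hq2 : q ≤ 2) {p₁ p₂ : E}
    (h₁ : ‖p₁‖ ≤ R) (h₂ : ‖p₂‖ ≤ R) :
    ‖p₁‖ ^ q / q - ‖p₂‖ ^ q / q ≥
      ⟪(‖p₂‖ ^ (q - 2)) • p₂, p₁ - p₂⟫ + (q - 1) * R ^ (q - 2) / 2 * ‖p₁ - p₂‖ ^ 2 := by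
  have hy : 0 ≤ ‖p₂‖ := norm_nonneg p₂
  have h1d := rpow_div_sub_rpow_div_ge hq1.le hq2 ⟨norm_nonneg p₁, h₁⟩ ⟨hy, h₂⟩
  have hpow : ‖p₂‖ ^ (q - 1) = ‖p₂‖ ^ (q - 2) * ‖p₂‖ := by
    rw [← Real.rpow_add_one' hy (by linarith)]; ring_nf
  have hslack : 0 ≤ (‖p₂‖ ^ (q - 2) - (q - 1) * R ^ (q - 2)) * (‖p₂‖ * ‖p₁‖ - ⟪p₂, p₁⟫) := by
    rcases hy.eq_or_lt with hy0 | hy0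
    -- the first factor is negative here (`0 ^ (q - 2) = 0`), but the second one vanishes
    · rw [← hy0, norm_eq_zero.1 hy0.symm]; simp
    · refine mul_nonneg ?_ (sub_nonneg.2 (real_inner_le_norm p₂ p₁))
      have : R ^ (q - 2) ≤ ‖p₂‖ ^ (q - 2) := Real.rpow_le_rpow_of_nonpos hy0 h₂ (by linarith)
      nlinarith [Real.rpow_nonneg (hy.trans h₂) (q - 2)]
  rw [real_inner_smul_left, inner_sub_right, real_inner_self_eq_norm_sq, norm_sub_sq_real,
    real_inner_comm p₂ p₁]
  rw [hpow] at h1d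
  linear_combination h1d + hslack

end RpowOnInterval

/-- **`(2,δ)`-strong convexity of `p ↦ |p|^q/q` on bounded sets, `1 < q < 2`**
(used in Theorem 4.1): for `1 < q < 2` and `R > 0` there is `δ > 0`, depending only on
`q` and `R`, such that for all `p₁, p₂` with `|p₁|, |p₂| ≤ R`,
`|p₁|^q/q - |p₂|^q/q ≥ |p₂|^{q-2}p₂·(p₁-p₂) + δ|p₁-p₂|²`. -/
theorem strong_convexity_on_bounded_sets (q R : ℝ) (hq1 : 1 < q) (hq2 : q < 2)
    (hR : 0 < R) :
    ∃ δ : ℝ, 0 < δ ∧ ∀ (n : ℕ), 1 ≤ n → ∀ p₁ p₂ : EuclideanSpace ℝ (Fin n),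
      ‖p₁‖ ≤ R → ‖p₂‖ ≤ R →
      ‖p₁‖ ^ q / q - ‖p₂‖ ^ q / q ≥
        ⟪(‖p₂‖ ^ (q - 2)) • p₂, p₁ - p₂⟫ + δ * ‖p₁ - p₂‖ ^ 2 := by
  refine ⟨(q - 1) * R ^ (q - 2) / 2, by have := sub_pos.2 hq1; positivity, ?_⟩
  intro n _ p₁ p₂ h₁ h₂
  exact norm_rpow_div_sub_norm_rpow_div_ge hq1 hq2.le h₁ h₂
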